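/- (Eigenfunctions of the continuous Hartley transform.) For every n ∈ ℕ with n ≥ 1, each choice of sign ±, and every x ∈ ℝ, (1/√(2π)) ∫_ℝ cas(xy) e^{−y²/2} 𝓗_{±n}(y) dy = (−1)^n e^{−x²/2} 𝓗_{±n}(x); moreover (1/√(2π)) ∫_ℝ cas(xy) e^{−y²/2} dy = e^{−x²/2}. Hence the functions e^{−x²/2} 𝓗_{±n}(x) are eigenfunctions of the Hartley transform with eigenvalue (−1)^n. -/

import Mathlib

/-- The cas function, `cas x = cos x - sin x`. -/
noncomputable def cas (x : ℝ) : ℝ := Real.cos x - Real.sin x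

/-- The physicists' Hermite polynomial, via the Rodrigues formula
`H n x = (-1)^n e^(x²) (dⁿ/dxⁿ) e^(-x²)`. -/
noncomputable def physHermite (n : ℕ) (x : ℝ) : ℝ :=
    (-1 : ℝ) ^ n * Real.exp (x ^ 2) * iteratedDeriv n (fun y : ℝ => Real.exp (-y ^ 2)) x

/-- The supersymmetric Hermite polynomial `𝓗_{εn} = H_{2n} + ε 2√n H_{2n-1}` for `n ≥ 1`
(with sign `ε = ±1`), and `𝓗₀ = 1`. -/
noncomputable def ssHermite (ε : ℝ) (n : ℕ) (x : ℝ) : ℝ :=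
    if n = 0 then 1
    else physHermite (2 * n) x + ε * (2 * Real.sqrt n) * physHermite (2 * n - 1) x

/-!
With Mathlib's normalisation `𝓕 f w = ∫ e^{-2πixw} f(x) dx`, the Hermite functions
`ψₖ(y) = e^{-y²/2} Hₖ(y)` satisfy `𝓕 ψₖ (w) = √(2π) (-i)ᵏ ψₖ(2πw)`. This holds for the Gaussian
`ψ₀`, and it propagates along `H_{k+1} = 2X Hₖ - Hₖ'` because `𝓕` exchanges multiplication by `x`
with differentiation. Since `cas t = Re e^{-it} + Im e^{-it}`, the Hartley transform of a real
function is `Re + Im` of its Fourier transform, so `ψₖ` is a Hartley eigenfunction with eigenvalue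
`Re (-i)ᵏ + Im (-i)ᵏ = (-1)^⌈k/2⌉`. This equals `(-1)ⁿ` both for `k = 2n` and for `k = 2n - 1`,
so every combination of `ψ_{2n}` and `ψ_{2n-1}`, in particular `e^{-y²/2} 𝓗_{±n}`, is an
eigenfunction too.
-/

open MeasureTheory Real Complex Polynomial
open scoped FourierTransform

noncomputable def physHermitePoly : ℕ → ℝ[X]
  | 0 => 1
  | n + 1 => 2 * X * physHermitePoly n - derivative (physHermitePoly n)

theorem hasDerivAt_exp_neg_sq_mul_eval (p : ℝ[X]) (x : ℝ) :
    HasDerivAt (fun y ↦ rexp (-y ^ 2) * p.eval y)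
      (rexp (-x ^ 2) * (derivative p - 2 * X * p).eval x) x := by
  have := (((hasDerivAt_pow 2 x).fun_neg).exp).fun_mul (p.hasDerivAt x)
  refine this.congr_deriv ?_
  simp only [eval_sub, eval_mul, eval_ofNat, eval_X]
  ring

theorem iteratedDeriv_exp_neg_sq (n : ℕ) :
    iteratedDeriv n (fun y ↦ rexp (-y ^ 2)) =
      fun x ↦ (-1) ^ n * (rexp (-x ^ 2) * (physHermitePoly n).eval x) := by
  induction n with
  | zero => simp [physHermitePoly]
  | succ n ih =>
    ext x
    rw [iteratedDeriv_succ, ih, deriv_const_mul_field']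
    dsimp only
    rw [(hasDerivAt_exp_neg_sq_mul_eval _ x).deriv, physHermitePoly]
    simp only [eval_sub, eval_mul, eval_ofNat, eval_X]
    ring

theorem physHermite_eq_eval (n : ℕ) (x : ℝ) : physHermite n x = (physHermitePoly n).eval x := by
  have hexp : rexp (x ^ 2) * rexp (-x ^ 2) = 1 := by rw [← Real.exp_add]; simp
  have hsign : ((-1 : ℝ) ^ n) ^ 2 = 1 := by rw [← pow_mul, mul_comm, pow_mul]; simp
  rw [physHermite, iteratedDeriv_exp_neg_sq]
  linear_combination (physHermitePoly n).eval x * (hsign * rexp (x ^ 2) * rexp (-x ^ 2) + hexp)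

theorem integrable_exp_neg_mul_sq_mul_eval {b : ℝ} (hb : 0 < b) (p : ℝ[X]) :
    Integrable fun y ↦ rexp (-b * y ^ 2) * p.eval y := by
  have hmonomial (i : ℕ) : Integrable fun y : ℝ ↦ y ^ i * rexp (-b * y ^ 2) := by
    simpa [Real.rpow_natCast] using
      integrable_rpow_mul_exp_neg_mul_sq hb (by linarith [i.cast_nonneg (α := ℝ)] : (-1 : ℝ) < i)
  simp_rw [eval_eq_sum_range, Finset.mul_sum]
  refine integrable_finsetSum _ fun i _ ↦ ((hmonomial i).const_mul (p.coeff i)).congr ?_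
  filter_upwards with y using by ring

theorem integrable_exp_neg_sq_div_two_mul_eval (p : ℝ[X]) :
    Integrable fun y ↦ rexp (-y ^ 2 / 2) * p.eval y := by
  refine (integrable_exp_neg_mul_sq_mul_eval (by norm_num : (0 : ℝ) < 1 / 2) p).congr ?_
  filter_upwards with y using by ring_nf

noncomputable def polyGaussian (p : ℝ[X]) (y : ℝ) : ℂ := (rexp (-y ^ 2 / 2) * p.eval y : ℝ)

theorem integrable_polyGaussian (p : ℝ[X]) : Integrable (polyGaussian p) :=
  (integrable_exp_neg_sq_div_two_mul_eval p).ofReal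

theorem hasDerivAt_polyGaussian (p : ℝ[X]) (x : ℝ) :
    HasDerivAt (polyGaussian p) (polyGaussian (derivative p - X * p) x) x := by
  have := (((hasDerivAt_pow 2 x).fun_neg.div_const 2).exp.fun_mul (p.hasDerivAt x)).ofReal_comp
  refine this.congr_deriv ?_
  simp only [polyGaussian, eval_sub, eval_mul, eval_X]
  push_cast
  ring

theorem polyGaussian_X_mul (p : ℝ[X]) (y : ℝ) :
    polyGaussian (X * p) y = y * polyGaussian p y := by
  simp only [polyGaussian, eval_mul, eval_X]
  push_cast
  ring

theorem polyGaussian_sub (p q : ℝ[X]) :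
    polyGaussian (p - q) = polyGaussian p - polyGaussian q := by
  ext y
  simp only [polyGaussian, eval_sub, Pi.sub_apply]
  push_cast
  ring

theorem fourier_polyGaussian_sub (p q : ℝ[X]) :
    𝓕 (polyGaussian (p - q)) = 𝓕 (polyGaussian p) - 𝓕 (polyGaussian q) := by
  ext w
  simp only [Real.fourier_eq, polyGaussian_sub, Pi.sub_apply, smul_sub]
  exact integral_sub ((Real.fourierIntegral_convergent_iff w).2 (integrable_polyGaussian p))
    ((Real.fourierIntegral_convergent_iff w).2 (integrable_polyGaussian q))

theorem deriv_polyGaussian (p : ℝ[X]) :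
    deriv (polyGaussian p) = polyGaussian (derivative p - X * p) :=
  funext fun x ↦ (hasDerivAt_polyGaussian p x).deriv

theorem hasDerivAt_fourier_polyGaussian (p : ℝ[X]) (w : ℝ) :
    HasDerivAt (𝓕 (polyGaussian p)) (-2 * π * I * 𝓕 (polyGaussian (X * p)) w) w := by
  have hXp : (fun x : ℝ ↦ x • polyGaussian p x) = polyGaussian (X * p) := by
    ext x
    rw [polyGaussian_X_mul, Complex.real_smul]
  have h := Real.hasDerivAt_fourier (integrable_polyGaussian p)
    (hXp ▸ integrable_polyGaussian (X * p)) w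
  have hsmul : (fun x : ℝ ↦ (-2 * π * I * x) • polyGaussian p x) =
      (-2 * π * I) • polyGaussian (X * p) := by
    ext x
    simp only [polyGaussian_X_mul, smul_eq_mul, Pi.smul_apply]
    ring
  rwa [hsmul, show 𝓕 ((-2 * π * I) • polyGaussian (X * p)) = (-2 * π * I) • 𝓕 (polyGaussian (X * p))
    from VectorFourier.fourierIntegral_const_smul _ _ _ _ _] at h

theorem fourier_polyGaussian_derivative_sub_X_mul (p : ℝ[X]) (w : ℝ) :
    𝓕 (polyGaussian (derivative p - X * p)) w = 2 * π * I * w * 𝓕 (polyGaussian p) w := by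
  rw [← deriv_polyGaussian, Real.fourier_deriv (integrable_polyGaussian p)
    (fun x ↦ (hasDerivAt_polyGaussian p x).differentiableAt)
    (deriv_polyGaussian p ▸ integrable_polyGaussian _)]
  rfl

theorem fourier_polyGaussian_raise {p : ℝ[X]} {c : ℂ}
    (hp : 𝓕 (polyGaussian p) = fun w ↦ c * polyGaussian p (2 * π * w)) :
    𝓕 (polyGaussian (2 * X * p - derivative p)) =
      fun w ↦ -I * c * polyGaussian (2 * X * p - derivative p) (2 * π * w) := by
  have hX (w : ℝ) :
      𝓕 (polyGaussian (X * p)) w = I * c * polyGaussian (derivative p - X * p) (2 * π * w) := by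
    have hchain := ((hasDerivAt_polyGaussian p (2 * π * w)).scomp w
      ((hasDerivAt_id w).const_mul (2 * π))).const_mul c
    have hF := hasDerivAt_fourier_polyGaussian p w
    rw [hp] at hF
    have h2πI : (-2 * π * I : ℂ) ≠ 0 := by simp [Real.pi_ne_zero, I_ne_zero]
    refine mul_left_cancel₀ h2πI ?_
    rw [hF.unique hchain, Complex.real_smul]
    push_cast
    linear_combination (2 * π * c * polyGaussian (derivative p - X * p) (2 * π * w)) * I_sq
  have hD (w : ℝ) :
      𝓕 (polyGaussian (derivative p - X * p)) w = I * c * polyGaussian (X * p) (2 * π * w) := by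
    rw [fourier_polyGaussian_derivative_sub_X_mul, hp, polyGaussian_X_mul]
    push_cast
    ring
  ext w
  rw [show 2 * X * p - derivative p = X * p - (derivative p - X * p) by ring,
    fourier_polyGaussian_sub, Pi.sub_apply, hX, hD, polyGaussian_sub (X * p), Pi.sub_apply]
  ring

theorem fourier_polyGaussian_one :
    𝓕 (polyGaussian 1) = fun w ↦ (√(2 * π) : ℂ) * polyGaussian 1 (2 * π * w) := by
  ext w
  have hgauss := fourierIntegral_gaussian (b := 1 / 2) (by norm_num) (-2 * π * w)
  have hsqrt : ((π : ℂ) / (1 / 2)) ^ (1 / 2 : ℂ) = √(2 * π) := by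
    rw [Real.sqrt_eq_rpow, ofReal_cpow Real.two_pi_pos.le]
    push_cast
    ring_nf
  rw [Real.fourier_real_eq_integral_exp_smul]
  convert hgauss using 1
  · congr 1
    ext x
    simp only [polyGaussian, eval_one, mul_one, smul_eq_mul, ofReal_exp]
    push_cast
    ring_nf
  · rw [hsqrt]
    simp only [polyGaussian, eval_one, mul_one, ofReal_exp]
    push_cast
    ring_nf

theorem fourier_polyGaussian_physHermitePoly (k : ℕ) :
    𝓕 (polyGaussian (physHermitePoly k)) =
      fun w ↦ √(2 * π) * (-I) ^ k * polyGaussian (physHermitePoly k) (2 * π * w) := by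
  induction k with
  | zero => simpa [physHermitePoly] using fourier_polyGaussian_one
  | succ k ih =>
    rw [physHermitePoly, fourier_polyGaussian_raise ih]
    ext w
    ring

theorem re_add_im_neg_I_pow (k : ℕ) : ((-I) ^ k).re + ((-I) ^ k).im = (-1) ^ ((k + 1) / 2) := by
  obtain ⟨m, rfl | rfl⟩ := Nat.even_or_odd' k
  · rw [pow_mul, neg_sq, I_sq, show (2 * m + 1) / 2 = m by omega, ← ofReal_one, ← ofReal_neg,
      ← ofReal_pow, ofReal_re, ofReal_im, add_zero]
  · rw [pow_succ, pow_mul, neg_sq, I_sq, show (2 * m + 1 + 1) / 2 = m + 1 by omega,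
      ← ofReal_one, ← ofReal_neg, ← ofReal_pow, re_ofReal_mul, im_ofReal_mul]
    simp only [neg_re, neg_im, I_re, I_im]
    ring

noncomputable def hartley (f : ℝ → ℝ) (x : ℝ) : ℝ := 1 / √(2 * π) * ∫ y, cas (x * y) * f y

theorem integrable_cas_mul {f : ℝ → ℝ} (hf : Integrable f) (x : ℝ) :
    Integrable fun y ↦ cas (x * y) * f y := by
  refine hf.bdd_mul (c := 2) (by unfold cas; fun_prop) (.of_forall fun y ↦ ?_)
  rw [cas, Real.norm_eq_abs]
  linarith [abs_sub (Real.cos (x * y)) (Real.sin (x * y)), Real.abs_cos_le_one (x * y),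
    Real.abs_sin_le_one (x * y)]

theorem hartley_add_const_mul {f g : ℝ → ℝ} (hf : Integrable f) (hg : Integrable g) (c x : ℝ) :
    hartley (fun y ↦ f y + c * g y) x = hartley f x + c * hartley g x := by
  simp only [hartley, mul_add, mul_left_comm _ c]
  rw [integral_add (integrable_cas_mul hf x) ((integrable_cas_mul hg x).const_mul c),
    integral_const_mul]
  ring

theorem hartley_eq_re_add_im_fourier {f : ℝ → ℝ} (hf : Integrable f) (x : ℝ) :
    hartley f x = 1 / √(2 * π) *
      ((𝓕 (fun y ↦ (f y : ℂ)) (x / (2 * π))).re + (𝓕 (fun y ↦ (f y : ℂ)) (x / (2 * π))).im) := by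
  let L : ℂ →L[ℝ] ℝ := reCLM + imCLM
  have hcas (y : ℝ) : cas (x * y) * f y = L (𝐞 (-inner ℝ y (x / (2 * π))) • (f y : ℂ)) := by
    have harg : 2 * π * -inner ℝ y (x / (2 * π)) = -(x * y) := by
      rw [real_inner_comm, RCLike.inner_apply, conj_trivial]
      field_simp
    rw [Circle.smul_def, Real.fourierChar_apply, harg]
    simp only [L, cas, smul_eq_mul, add_apply, reCLM_apply, imCLM_apply, re_mul_ofReal,
      im_mul_ofReal, exp_ofReal_mul_I_re, exp_ofReal_mul_I_im, Real.cos_neg, Real.sin_neg]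
    ring
  simp_rw [hartley, hcas]
  rw [Real.fourier_eq]
  congr 1
  exact L.integral_comp_comm ((Real.fourierIntegral_convergent_iff (x / (2 * π))).2 hf.ofReal)

theorem integrable_exp_mul_physHermite (k : ℕ) :
    Integrable fun y ↦ rexp (-y ^ 2 / 2) * physHermite k y := by
  simpa only [physHermite_eq_eval] using integrable_exp_neg_sq_div_two_mul_eval _

theorem hartley_exp_mul_physHermite (k : ℕ) (x : ℝ) :
    hartley (fun y ↦ rexp (-y ^ 2 / 2) * physHermite k y) x =
      (-1) ^ ((k + 1) / 2) * (rexp (-x ^ 2 / 2) * physHermite k x) := by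
  rw [hartley_eq_re_add_im_fourier (integrable_exp_mul_physHermite k)]
  simp_rw [physHermite_eq_eval]
  change 1 / √(2 * π) * ((𝓕 (polyGaussian _) _).re + (𝓕 (polyGaussian _) _).im) = _
  rw [fourier_polyGaussian_physHermitePoly]
  dsimp only
  rw [mul_div_cancel₀ x Real.two_pi_pos.ne', polyGaussian,
    mul_comm _ ((_ : ℝ) : ℂ), re_ofReal_mul, im_ofReal_mul, re_ofReal_mul, im_ofReal_mul,
    ← re_add_im_neg_I_pow]
  field_simp

/-- The functions `e^(-x²/2) 𝓗_{εn}(x)` are eigenfunctions of the continuous Hartley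
transform with eigenvalue `(-1)^n`:
`(1/√(2π)) ∫ cas(xy) e^(-y²/2) 𝓗_{εn}(y) dy = (-1)^n e^(-x²/2) 𝓗_{εn}(x)`,
and the Gaussian `e^(-x²/2)` is fixed by the Hartley transform. -/
theorem hartley_ssHermite_eigen :
    (∀ n : ℕ, 1 ≤ n → ∀ ε : ℝ, ε = 1 ∨ ε = -1 → ∀ x : ℝ,
      (1 / Real.sqrt (2 * Real.pi)) *
          ∫ y : ℝ, cas (x * y) * (Real.exp (-y ^ 2 / 2) * ssHermite ε n y) =
        (-1 : ℝ) ^ n * (Real.exp (-x ^ 2 / 2) * ssHermite ε n x)) ∧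
    (∀ x : ℝ,
      (1 / Real.sqrt (2 * Real.pi)) * ∫ y : ℝ, cas (x * y) * Real.exp (-y ^ 2 / 2) =
        Real.exp (-x ^ 2 / 2)) := by
  refine ⟨fun n hn ε _ x ↦ ?_, fun x ↦ ?_⟩
  · have hn0 : n ≠ 0 := by omega
    have hsplit : (fun y ↦ rexp (-y ^ 2 / 2) * ssHermite ε n y) = fun y ↦
        rexp (-y ^ 2 / 2) * physHermite (2 * n) y +
          ε * (2 * √n) * (rexp (-y ^ 2 / 2) * physHermite (2 * n - 1) y) := by
      ext y
      rw [ssHermite, if_neg hn0]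
      ring
    change hartley _ x = _
    rw [hsplit, hartley_add_const_mul (integrable_exp_mul_physHermite _)
      (integrable_exp_mul_physHermite _), hartley_exp_mul_physHermite,
      hartley_exp_mul_physHermite, show (2 * n + 1) / 2 = n by omega,
      show (2 * n - 1 + 1) / 2 = n by omega, ssHermite, if_neg hn0]
    ring
  · simpa [hartley, physHermite_eq_eval, physHermitePoly] using hartley_exp_mul_physHermite 0 x
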